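/- Let M be a compact connected metric measure space satisfying Conditions A and B, admitting for each large N a partition into N equal-measure parts of diameter ≤ c₈ N^{−1/d}. With the random point distribution X_N as above (one independent uniform point per part), for every y ∈ M, r ∈ [0,1], and 1 ≤ p < ∞: E|L[B(y,r), X_N]|^p ≤ 2^p (p+1)^{p/2} c₉^{p/2} N^{(1/2 − 1/(2d)) p}, where c₉ = 4 c₂ c₈. -/

import Mathlib

open MeasureTheory Metric Set ProbabilityTheory

/-- The volume of the metric ball, with the convention `v(y,r) = 1` for `r ≥ 1`. -/
noncomputable def vol {M : Type*} [MetricSpace M] [MeasurableSpace M]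
    (μ : MeasureTheory.Measure M) (y : M) (r : ℝ) : ℝ :=
  if 1 ≤ r then 1 else (μ (Metric.ball y r)).toReal

/-! The centred counts `1_B(X_j) - E 1_B(X_j)`, `B = B(y,r)`, are independent, take values in an
interval of length one, and vanish almost surely unless the part `P_j` meets both `B` and its
complement. By Hoeffding's lemma their sum is sub-Gaussian with variance proxy `K/4`, where `K` is
the number of such straddling parts. These parts lie in the annulus `B(y,r+δ) \ B(y,r-δ)` with
`δ = c₈ N^{-1/d}`, whose measure is at most `2 c₂ δ` by Condition B, so `K ≤ 2 c₂ c₈ N^{1-1/d}`.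
Finally a variable with sub-Gaussian proxy `c` has `E|S|^p ≤ 2 (p c)^{p/2} e^{-p/2}`, by integrating
`|x|^p ≤ (p/t)^p e^{-p} (e^{tx} + e^{-tx})` and choosing `t` optimally. -/

open scoped NNReal ENNReal

namespace Real

lemma rpow_le_exp_mul_sub_one {u p : ℝ} (hu : 0 ≤ u) (hp : 0 ≤ p) :
    u ^ p ≤ exp (p * (u - 1)) := by
  rw [mul_comm, exp_mul]
  exact rpow_le_rpow hu (by linarith [add_one_le_exp (u - 1)]) hp

lemma abs_rpow_le_mul_exp_add_exp (x : ℝ) {t p : ℝ} (ht : 0 < t) (hp : 0 < p) :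
    |x| ^ p ≤ (p / t) ^ p * exp (-p) * (exp (t * x) + exp (-t * x)) := by
  have hexp : exp (t * |x|) ≤ exp (t * x) + exp (-t * x) := by
    rcases abs_cases x with ⟨hx, -⟩ | ⟨hx, -⟩ <;> rw [hx]
    · exact le_add_of_nonneg_right (exp_pos _).le
    · rw [mul_neg, ← neg_mul]
      exact le_add_of_nonneg_left (exp_pos _).le
  calc |x| ^ p = (p / t) ^ p * (t * |x| / p) ^ p := by
        rw [← mul_rpow (by positivity) (by positivity)]
        congr 1
        field_simp
    _ ≤ (p / t) ^ p * exp (p * (t * |x| / p - 1)) := by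
        gcongr
        exact rpow_le_exp_mul_sub_one (by positivity) hp.le
    _ = (p / t) ^ p * exp (-p) * exp (t * |x|) := by
        rw [mul_assoc, ← exp_add]
        congr 2
        field_simp
        ring
    _ ≤ _ := by gcongr

end Real

namespace ProbabilityTheory.HasSubgaussianMGF

variable {Ω : Type*} [MeasurableSpace Ω] {μ : Measure Ω} {X : Ω → ℝ} {c : ℝ≥0}

lemma integral_abs_rpow_le (h : HasSubgaussianMGF X c μ) {p : ℝ} (hp : 0 < p) :
    ∫ ω, |X ω| ^ p ∂μ ≤ 2 * (p * c) ^ (p / 2) * Real.exp (-(p / 2)) := by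
  rcases eq_or_ne c 0 with rfl | hc
  · have hX : (fun ω ↦ |X ω| ^ p) =ᵐ[μ] 0 := by
      filter_upwards [h.ae_eq_zero_of_hasSubgaussianMGF_zero] with ω hω
      simp [hω, Real.zero_rpow hp.ne']
    rw [integral_congr_ae hX, Pi.zero_def, integral_zero]
    positivity
  -- the Chernoff-type bound below is optimised at `t = √(p / c)`
  set s := Real.sqrt (p * c) with hs_def
  have hs : 0 < s := Real.sqrt_pos.mpr (by positivity)
  set t := p / s with ht_def
  have ht : 0 < t := by positivity
  have hts : p / t = s := by rw [ht_def]; field_simp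
  have hct : c * t ^ 2 / 2 = p / 2 := by
    simp only [t, div_pow, Real.sq_sqrt (by positivity : (0:ℝ) ≤ p * c), s]
    field_simp
  have hsp : s ^ p = (p * c) ^ (p / 2) := by
    rw [hs_def, Real.sqrt_eq_rpow, ← Real.rpow_mul (by positivity)]
    ring_nf
  calc ∫ ω, |X ω| ^ p ∂μ
      ≤ ∫ ω, (p / t) ^ p * Real.exp (-p) * (Real.exp (t * X ω) + Real.exp (-t * X ω)) ∂μ :=
        integral_mono_of_nonneg (ae_of_all _ fun ω ↦ by positivity)
          (((h.integrable_exp_mul t).add (h.integrable_exp_mul (-t))).const_mul _)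
          (ae_of_all _ fun ω ↦ Real.abs_rpow_le_mul_exp_add_exp (X ω) ht hp)
    _ = (p / t) ^ p * Real.exp (-p) * (mgf X μ t + mgf X μ (-t)) := by
        rw [integral_const_mul, integral_add (h.integrable_exp_mul t) (h.integrable_exp_mul (-t))]
        rfl
    _ ≤ (p / t) ^ p * Real.exp (-p) * (Real.exp (p / 2) + Real.exp (p / 2)) := by
        gcongr
        · exact (h.mgf_le t).trans_eq (by rw [hct])
        · exact (h.mgf_le (-t)).trans_eq (by rw [neg_sq, hct])
    _ = 2 * (p * c) ^ (p / 2) * Real.exp (-(p / 2)) := by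
        have hexp : Real.exp (-p) * Real.exp (p / 2) = Real.exp (-(p / 2)) := by
          rw [← Real.exp_add]; ring_nf
        rw [hts, hsp, ← two_mul, ← hexp]
        ring

end ProbabilityTheory.HasSubgaussianMGF

lemma two_mul_rpow_mul_exp_neg_le {p a b : ℝ} (hp : 1 ≤ p) (ha : 0 ≤ a) (hab : a ≤ b) :
    2 * (p * a) ^ (p / 2) * Real.exp (-(p / 2)) ≤ 2 ^ p * (p + 1) ^ (p / 2) * b ^ (p / 2) := by
  have hb : 0 ≤ b := ha.trans hab
  rw [mul_assoc (2 ^ p), ← Real.mul_rpow (by linarith) hb]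
  calc 2 * (p * a) ^ (p / 2) * Real.exp (-(p / 2)) ≤ 2 ^ p * ((p + 1) * b) ^ (p / 2) * 1 := by
        gcongr
        · exact Real.self_le_rpow_of_one_le one_le_two hp
        · linarith
        · exact Real.exp_le_one_iff.mpr (by linarith)
    _ = 2 ^ p * ((p + 1) * b) ^ (p / 2) := mul_one _

open Classical in
noncomputable def straddlingParts {M ι : Type*} [Fintype ι] (P : ι → Set M) (B : Set M) :
    Finset ι :=
  {j | (P j ∩ B).Nonempty ∧ (P j \ B).Nonempty}

section RandomPoint

variable {Ω M : Type*} [MeasurableSpace Ω] [MeasurableSpace M] {Pr : Measure Ω} {μ : Measure M}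
  {Y : Ω → M} {B s : Set M}

lemma ae_mem_of_map_eq_smul_restrict (hY : AEMeasurable Y Pr) (hs : MeasurableSet s) {c : ℝ≥0∞}
    (hlaw : Pr.map Y = c • μ.restrict s) : ∀ᵐ ω ∂Pr, Y ω ∈ s := by
  refine (ae_map_iff hY hs).mp ?_
  rw [hlaw]
  exact Measure.ae_smul_measure (ae_restrict_mem hs) c

lemma integral_indicator_one_comp_of_map_eq_smul_restrict (hY : AEMeasurable Y Pr)
    (hB : MeasurableSet B) {c : ℝ≥0∞} (hlaw : Pr.map Y = c • μ.restrict s) :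
    ∫ ω, B.indicator (1 : M → ℝ) (Y ω) ∂Pr = c.toReal * μ.real (B ∩ s) := by
  rw [← integral_map hY (measurable_one.indicator hB).aestronglyMeasurable, hlaw,
    integral_indicator_one hB, measureReal_def, Measure.smul_apply, Measure.restrict_apply hB,
    smul_eq_mul, ENNReal.toReal_mul, measureReal_def]

open Classical in
lemma hasSubgaussianMGF_indicator_comp_sub_integral [IsProbabilityMeasure Pr]
    (hY : AEMeasurable Y Pr) (hB : MeasurableSet B) (hYs : ∀ᵐ ω ∂Pr, Y ω ∈ s) :
    HasSubgaussianMGF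
      (fun ω ↦ B.indicator 1 (Y ω) - ∫ ω, B.indicator (1 : M → ℝ) (Y ω) ∂Pr)
      (if (s ∩ B).Nonempty ∧ (s \ B).Nonempty then 4⁻¹ else 0) Pr := by
  have hm : AEMeasurable (fun ω ↦ B.indicator (1 : M → ℝ) (Y ω)) Pr :=
    (measurable_one.indicator hB).comp_aemeasurable hY
  split_ifs with hsB
  · convert hasSubgaussianMGF_of_mem_Icc hm (a := 0) (b := 1)
      (ae_of_all _ fun ω ↦ ⟨indicator_nonneg (fun _ _ ↦ zero_le_one) _,
        indicator_le_self' (fun _ _ ↦ zero_le_one) _⟩)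
    norm_num
  · obtain ⟨v, hv⟩ : ∃ v : ℝ, ∀ x ∈ s, B.indicator 1 x = v := by
      by_cases hin : (s ∩ B).Nonempty
      · have hsub : s ⊆ B :=
          sdiff_eq_empty.mp (not_nonempty_iff_eq_empty.mp (hsB ∘ And.intro hin))
        exact ⟨1, fun x hx ↦ indicator_of_mem (hsub hx) _⟩
      · exact ⟨0, fun x hx ↦ indicator_of_notMem (fun hxB ↦ hin ⟨x, hx, hxB⟩) _⟩
    convert hasSubgaussianMGF_of_mem_Icc hm (a := v) (b := v)
      (by filter_upwards [hYs] with ω hω; simp [hv _ hω])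
    simp

lemma sum_measureReal_inter_eq [IsFiniteMeasure μ] {ι : Type*} [Fintype ι] {P : ι → Set M}
    (hmeas : ∀ j, MeasurableSet (P j)) (hdisj : Pairwise (Function.onFun Disjoint P))
    (hcover : (⋃ j, P j) = univ) (hB : MeasurableSet B) :
    ∑ j, μ.real (B ∩ P j) = μ.real B := by
  rw [← measureReal_iUnion_fintype
      (fun i j hij ↦ (hdisj hij).mono inter_subset_right inter_subset_right)
      (fun j ↦ hB.inter (hmeas j)), ← inter_iUnion, hcover, inter_univ]

variable {ι : Type*} [Fintype ι] {X : ι → Ω → M} {P : ι → Set M}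

lemma sum_integral_indicator_one_comp_eq [IsFiniteMeasure μ] (hX : ∀ j, AEMeasurable (X j) Pr)
    (hmeas : ∀ j, MeasurableSet (P j)) (hdisj : Pairwise (Function.onFun Disjoint P))
    (hcover : (⋃ j, P j) = univ) {c : ℝ≥0∞} (hlaw : ∀ j, Pr.map (X j) = c • μ.restrict (P j))
    (hB : MeasurableSet B) :
    ∑ j, ∫ ω, B.indicator (1 : M → ℝ) (X j ω) ∂Pr = c.toReal * μ.real B := by
  rw [← sum_measureReal_inter_eq hmeas hdisj hcover hB, Finset.mul_sum]
  exact Finset.sum_congr rfl fun j _ ↦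
    integral_indicator_one_comp_of_map_eq_smul_restrict (hX j) hB (hlaw j)

lemma hasSubgaussianMGF_sum_indicator_comp_sub_integral [IsProbabilityMeasure Pr]
    (hX : ∀ j, AEMeasurable (X j) Pr) (hindep : iIndepFun X Pr)
    (hXP : ∀ j, ∀ᵐ ω ∂Pr, X j ω ∈ P j) (hB : MeasurableSet B) :
    HasSubgaussianMGF
      (fun ω ↦ ∑ j, (B.indicator 1 (X j ω) - ∫ ω, B.indicator (1 : M → ℝ) (X j ω) ∂Pr))
      ((straddlingParts P B).card * 4⁻¹) Pr := by
  have h := HasSubgaussianMGF.sum_of_iIndepFun (s := Finset.univ)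
    (hindep.comp (fun j x ↦ B.indicator 1 x - ∫ ω, B.indicator (1 : M → ℝ) (X j ω) ∂Pr)
      fun j ↦ (measurable_one.indicator hB).sub_const _)
    fun j _ ↦ hasSubgaussianMGF_indicator_comp_sub_integral (hX j) hB (hXP j)
  classical
  rwa [← Finset.sum_filter, Finset.sum_const, nsmul_eq_mul] at h

end RandomPoint

lemma subset_ball_diff_ball_of_diam_le {M : Type*} [PseudoMetricSpace M] {s : Set M} {y : M}
    {r δ : ℝ} (hs : Bornology.IsBounded s) (hδ : diam s ≤ δ) (hin : (s ∩ ball y r).Nonempty)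
    (hout : (s \ ball y r).Nonempty) :
    s ⊆ ball y (r + δ) \ ball y (r - δ) := by
  obtain ⟨z, hzs, hz⟩ := hin
  obtain ⟨w, hws, hw⟩ := hout
  rw [mem_ball] at hz
  rw [mem_ball, not_lt] at hw
  intro u hu
  have huz := (dist_le_diam_of_mem hs hu hzs).trans hδ
  have hwu := (dist_le_diam_of_mem hs hws hu).trans hδ
  refine ⟨mem_ball.mpr ?_, fun hu' ↦ ?_⟩
  · linarith [dist_triangle u z y]
  · linarith [dist_triangle w u y, mem_ball.mp hu']

section Annulus

variable {M ι : Type*} [MetricSpace M] [MeasurableSpace M] [OpensMeasurableSpace M]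
  (μ : Measure M) [IsProbabilityMeasure μ]

lemma measureReal_ball_diff_ball_le {y : M} {c₂ : ℝ}
    (hB : ∀ r₁ r₂ : ℝ, |vol μ y r₁ - vol μ y r₂| ≤ c₂ * |r₁ - r₂|) {s t : ℝ} (hst : s ≤ t)
    (hs : s < 1) : μ.real (ball y t \ ball y s) ≤ c₂ * (t - s) := by
  have hsub : ball y s ⊆ ball y t := ball_subset_ball hst
  have hvs : μ.real (ball y s) = vol μ y s := by rw [vol, if_neg (not_le.mpr hs), measureReal_def]
  have hvt : μ.real (ball y t) ≤ vol μ y t := by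
    rw [vol]
    split_ifs
    · exact measureReal_le_one
    · rfl
  rw [measureReal_sdiff hsub measurableSet_ball, hvs]
  have := hB t s
  rw [abs_of_nonneg (sub_nonneg.mpr hst)] at this
  linarith [le_abs_self (vol μ y t - vol μ y s)]

lemma card_straddlingParts_mul_le [Fintype ι] (P : ι → Set M) (hmeas : ∀ j, MeasurableSet (P j))
    (hdisj : Pairwise (Function.onFun Disjoint P)) {m : ℝ} (hsize : ∀ j, μ.real (P j) = m)
    {δ : ℝ} (hδ : 0 < δ) (hbdd : ∀ j, Bornology.IsBounded (P j)) (hdiam : ∀ j, diam (P j) ≤ δ)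
    {y : M} {r c₂ : ℝ} (hr : r ≤ 1)
    (hB : ∀ r₁ r₂ : ℝ, |vol μ y r₁ - vol μ y r₂| ≤ c₂ * |r₁ - r₂|) :
    (straddlingParts P (ball y r)).card * m ≤ 2 * c₂ * δ := by
  set S := straddlingParts P (ball y r)
  have hS : ⋃ j ∈ S, P j ⊆ ball y (r + δ) \ ball y (r - δ) := by
    refine iUnion₂_subset fun j hj ↦ ?_
    simp only [S, straddlingParts, Finset.mem_filter, Finset.mem_univ, true_and] at hj
    exact subset_ball_diff_ball_of_diam_le (hbdd j) (hdiam j) hj.1 hj.2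
  calc (S.card : ℝ) * m = μ.real (⋃ j ∈ S, P j) := by
        rw [measureReal_biUnion_finset (fun i _ j _ hij ↦ hdisj hij) (fun j _ ↦ hmeas j)]
        simp [hsize]
    _ ≤ μ.real (ball y (r + δ) \ ball y (r - δ)) := measureReal_mono hS
    _ ≤ c₂ * (r + δ - (r - δ)) := measureReal_ball_diff_ball_le μ hB (by linarith) (by linarith)
    _ = 2 * c₂ * δ := by ring

end Annulus

theorem stmt8_general {M : Type*} [MetricSpace M] [CompactSpace M]
    [MeasurableSpace M] [BorelSpace M] (μ : Measure M) [IsProbabilityMeasure μ]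
    (d c₂ c₈ : ℝ) (hc₂ : 0 < c₂) (hc₈ : 0 < c₈)
    (hB : ∀ y : M, ∀ r₁ r₂ : ℝ, |vol μ y r₁ - vol μ y r₂| ≤ c₂ * |r₁ - r₂|)
    (N : ℕ) (hN : 0 < N) (P : Fin N → Set M)
    (hmeas : ∀ j, MeasurableSet (P j))
    (hdisj : Pairwise (Function.onFun Disjoint P))
    (hcover : (⋃ j, P j) = Set.univ)
    (hsize : ∀ j, μ (P j) = 1 / N)
    (hPdiam : ∀ j, Metric.diam (P j) ≤ c₈ * (N : ℝ) ^ (-(1:ℝ)/d))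
    {Ω : Type*} [MeasurableSpace Ω] (Pr : Measure Ω) [IsProbabilityMeasure Pr]
    (X : Fin N → Ω → M) (hXmeas : ∀ j, Measurable (X j))
    (hXindep : iIndepFun X Pr)
    (hXlaw : ∀ j, Measure.map (X j) Pr = (N : ENNReal) • μ.restrict (P j))
    (y : M) (r : ℝ) (hr : r ∈ Set.Icc (0:ℝ) 1) (p : ℝ) (hp : 1 ≤ p) :
    ∫ ω, |(∑ j : Fin N, (Metric.ball y r).indicator 1 (X j ω) : ℝ)
            - N * (μ (Metric.ball y r)).toReal| ^ p ∂Pr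
      ≤ 2 ^ p * (p + 1) ^ (p / 2) * (4 * c₂ * c₈) ^ (p / 2)
          * (N : ℝ) ^ ((1/2 - 1/(2*d)) * p) := by
  have hNpos : (0 : ℝ) < N := Nat.cast_pos.mpr hN
  set B := ball y r
  have hXP : ∀ j, ∀ᵐ ω ∂Pr, X j ω ∈ P j := fun j ↦
    ae_mem_of_map_eq_smul_restrict (hXmeas j).aemeasurable (hmeas j) (hXlaw j)
  have hmean : ∑ j, ∫ ω, B.indicator (1 : M → ℝ) (X j ω) ∂Pr = N * μ.real B := by
    simpa using sum_integral_indicator_one_comp_eq (fun j ↦ (hXmeas j).aemeasurable) hmeas hdisj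
      hcover hXlaw measurableSet_ball
  have hcard : ((straddlingParts P B).card : ℝ) ≤ 2 * c₂ * c₈ * (N : ℝ) ^ (1 - 1 / d) := by
    have h := card_straddlingParts_mul_le μ P hmeas hdisj (m := 1 / N)
      (fun j ↦ by simp [measureReal_def, hsize j]) (by positivity)
      (fun _ ↦ isBounded_of_compactSpace) hPdiam hr.2 (hB y)
    rw [mul_one_div, div_le_iff₀ hNpos] at h
    rw [sub_eq_add_neg, Real.rpow_add hNpos, Real.rpow_one, ← neg_div]
    linarith
  calc ∫ ω, |(∑ j : Fin N, B.indicator 1 (X j ω) : ℝ) - N * (μ B).toReal| ^ p ∂Pr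
      = ∫ ω, |∑ j, (B.indicator 1 (X j ω) - ∫ ω', B.indicator (1 : M → ℝ) (X j ω') ∂Pr)| ^ p
          ∂Pr := by
        simp only [Finset.sum_sub_distrib, hmean, measureReal_def]
    _ ≤ 2 * (p * ((straddlingParts P B).card * 4⁻¹ : ℝ≥0)) ^ (p / 2) * Real.exp (-(p / 2)) :=
        (hasSubgaussianMGF_sum_indicator_comp_sub_integral (fun j ↦ (hXmeas j).aemeasurable)
          hXindep hXP measurableSet_ball).integral_abs_rpow_le (by linarith)
    _ ≤ 2 ^ p * (p + 1) ^ (p / 2) * (4 * c₂ * c₈ * (N : ℝ) ^ (1 - 1 / d)) ^ (p / 2) :=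
        two_mul_rpow_mul_exp_neg_le hp (by positivity) (by push_cast; linarith)
    _ = 2 ^ p * (p + 1) ^ (p / 2) * (4 * c₂ * c₈) ^ (p / 2)
          * (N : ℝ) ^ ((1/2 - 1/(2*d)) * p) := by
        rw [Real.mul_rpow (by positivity) (by positivity), ← Real.rpow_mul hNpos.le, mul_assoc]
        ring_nf

/-- moment bound for the local discrepancy of the random point set:
`E|L[B(y,r), X_N]|^p ≤ 2^p (p+1)^{p/2} c₉^{p/2} N^{(1/2 - 1/(2d))p}` with `c₉ = 4 c₂ c₈`. -/
theorem stmt8 {M : Type*} [MetricSpace M] [CompactSpace M] [ConnectedSpace M] [Nonempty M]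
    [MeasurableSpace M] [BorelSpace M] (μ : Measure M) [IsProbabilityMeasure μ]
    (hdiam : Metric.diam (Set.univ : Set M) = 1)
    (d c₁ c₂ c₈ : ℝ) (hd : 0 < d) (hc₁ : 0 < c₁) (hc₂ : 0 < c₂) (hc₈ : 0 < c₈)
    (hA : ∀ y : M, ∀ r ∈ Set.Icc (0:ℝ) 1,
      c₁⁻¹ * r ^ d ≤ vol μ y r ∧ vol μ y r ≤ c₁ * r ^ d)
    (hB : ∀ y : M, ∀ r₁ r₂ : ℝ, |vol μ y r₁ - vol μ y r₂| ≤ c₂ * |r₁ - r₂|)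
    (N : ℕ) (hN : 0 < N) (P : Fin N → Set M)
    (hmeas : ∀ j, MeasurableSet (P j))
    (hdisj : Pairwise (Function.onFun Disjoint P))
    (hcover : (⋃ j, P j) = Set.univ)
    (hsize : ∀ j, μ (P j) = 1 / N)
    (hPdiam : ∀ j, Metric.diam (P j) ≤ c₈ * (N : ℝ) ^ (-(1:ℝ)/d))
    {Ω : Type*} [MeasurableSpace Ω] (Pr : Measure Ω) [IsProbabilityMeasure Pr]
    (X : Fin N → Ω → M) (hXmeas : ∀ j, Measurable (X j))
    (hXindep : iIndepFun X Pr)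
    (hXlaw : ∀ j, Measure.map (X j) Pr = (N : ENNReal) • μ.restrict (P j))
    (y : M) (r : ℝ) (hr : r ∈ Set.Icc (0:ℝ) 1) (p : ℝ) (hp : 1 ≤ p) :
    ∫ ω, |(∑ j : Fin N, (Metric.ball y r).indicator 1 (X j ω) : ℝ)
            - N * (μ (Metric.ball y r)).toReal| ^ p ∂Pr
      ≤ 2 ^ p * (p + 1) ^ (p / 2) * (4 * c₂ * c₈) ^ (p / 2)
          * (N : ℝ) ^ ((1/2 - 1/(2*d)) * p) :=
  stmt8_general μ d c₂ c₈ hc₂ hc₈ hB N hN P hmeas hdisj hcover hsize hPdiam Pr X hXmeas hXindep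
    hXlaw y r hr p hp
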